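/- arXiv:1404.1877 — 5 statements merged into one kernel-verified Lean document; each statement's English description precedes it below -/
import Mathlib

section
/- The number of walks on the lattice ℕ² (including 0) starting and ending at (0,0), consisting of 2n steps each taken from the set {(-1,-1), (-1,1), (1,-1), (1,1)}, and never leaving ℕ², equals the square of the n-th Catalan number, c_n² where c_n = (1/(n+1))·C(2n,n). -/
open DyckStep List

/-- 1D Dyck paths of length m, as height functions. -/
def PathSet (m : ℕ) :=
  {q : Fin (m + 1) → ℕ //
    q 0 = 0 ∧ q (Fin.last m) = 0 ∧
    ∀ i : Fin m, q i.succ = q i.castSucc + 1 ∨ q i.castSucc = q i.succ + 1}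

namespace PathSet

variable {m : ℕ}

/-- The step list of a path. -/
def steps (q : Fin (m + 1) → ℕ) : List DyckStep :=
  List.ofFn (fun i : Fin m => if q i.castSucc < q i.succ then U else D)

lemma length_steps (q : Fin (m + 1) → ℕ) : (steps q).length = m := by
  simp [steps]

lemma steps_getElem (q : Fin (m + 1) → ℕ) {k : ℕ} (hk : k < m) :
    (steps q)[k]'(by simp [length_steps, hk]) =
      if q ⟨k, by omega⟩ < q ⟨k + 1, by omega⟩ then U else D := by
  simp only [steps, List.getElem_ofFn]
  rfl

lemma counts (q : Fin (m + 1) → ℕ) (h0 : q 0 = 0)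
    (hs : ∀ i : Fin m, q i.succ = q i.castSucc + 1 ∨ q i.castSucc = q i.succ + 1) :
    ∀ k (hk : k ≤ m),
    ((steps q).take k).count U + ((steps q).take k).count D = k ∧
    ((steps q).take k).count U = ((steps q).take k).count D + q ⟨k, by omega⟩ := by
  intro k hk
  induction k with
  | zero => simpa using h0.symm
  | succ k ih =>
    obtain ⟨ih1, ih2⟩ := ih (by omega)
    have hkm : k < (steps q).length := by rw [length_steps]; omega
    have ht : (steps q).take (k + 1) = (steps q).take k ++ [(steps q)[k]] := by
      rw [List.take_succ, List.getElem?_eq_getElem hkm]; rfl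
    have hg := steps_getElem q (by omega : k < m)
    have hstep := hs ⟨k, by omega⟩
    have hcs : (Fin.castSucc ⟨k, by omega⟩ : Fin (m+1)) = ⟨k, by omega⟩ := rfl
    have hsu : (Fin.succ ⟨k, by omega⟩ : Fin (m+1)) = ⟨k+1, by omega⟩ := rfl
    rw [hcs, hsu] at hstep
    rcases hstep with h | h
    · have : (steps q)[k] = U := by rw [hg, if_pos (by omega)]
      rw [ht, this]
      simp [List.count_append]
      omega
    · have : (steps q)[k] = D := by rw [hg, if_neg (by omega)]
      rw [ht, this]
      simp [List.count_append]
      omega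

/-- The Dyck word of a path. -/
def toWord (q : PathSet m) : DyckWord where
  toList := steps q.1
  count_U_eq_count_D := by
    have := counts q.1 q.2.1 q.2.2.2 m le_rfl
    rw [List.take_of_length_le (le_of_eq (length_steps q.1))] at this
    have hl : q.1 ⟨m, by omega⟩ = 0 := q.2.2.1
    omega
  count_D_le_count_U i := by
    rcases le_or_gt i m with h | h
    · have := (counts q.1 q.2.1 q.2.2.2 i h).2; omega
    · rw [List.take_of_length_le (by rw [length_steps]; omega)]
      have h2 := (counts q.1 q.2.1 q.2.2.2 m le_rfl).2
      rw [List.take_of_length_le (le_of_eq (length_steps q.1))] at h2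
      have hl : q.1 ⟨m, by omega⟩ = 0 := q.2.2.1
      omega

/-- The height function of a Dyck word. -/
def heights (w : DyckWord) (k : ℕ) : ℕ :=
  (w.toList.take k).count U - (w.toList.take k).count D

lemma heights_step (w : DyckWord) {k : ℕ} (hk : k < w.toList.length) :
    (w.toList[k] = U ∧ heights w (k + 1) = heights w k + 1) ∨
    (w.toList[k] = D ∧ heights w k = heights w (k + 1) + 1) := by
  have ht : w.toList.take (k + 1) = w.toList.take k ++ [w.toList[k]] := by
    rw [List.take_succ, List.getElem?_eq_getElem hk]; rfl
  have hd := w.count_D_le_count_U k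
  have hd' := w.count_D_le_count_U (k + 1)
  rw [ht] at hd'
  rcases (w.toList[k]).dichotomy with h | h
  · left
    refine ⟨h, ?_⟩
    unfold heights
    rw [ht, h]
    simp [List.count_append]
    omega
  · right
    refine ⟨h, ?_⟩
    unfold heights
    rw [ht, h]
    rw [h] at hd'
    simp [List.count_append] at hd' ⊢
    omega

/-- The path of a Dyck word of length m. -/
def ofWord (w : {w : DyckWord // w.toList.length = m}) : PathSet m := by
  refine ⟨fun k => heights w.1 k, ?_, ?_, ?_⟩
  · simp [heights]
  · show heights w.1 m = 0
    unfold heights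
    rw [List.take_of_length_le (le_of_eq w.2), w.1.count_U_eq_count_D]
    omega
  · intro i
    have := heights_step w.1 (k := i) (by rw [w.2]; exact i.2)
    show heights w.1 (i + 1) = heights w.1 i + 1 ∨ heights w.1 i = heights w.1 (i + 1) + 1
    tauto

/-- Dyck paths of length `m` are equivalent to Dyck words of length `m`. -/
def equivWord : PathSet m ≃ {w : DyckWord // w.toList.length = m} where
  toFun q := ⟨toWord q, length_steps q.1⟩
  invFun := ofWord
  left_inv q := by
    apply Subtype.ext
    funext k
    show heights (toWord q) k = q.1 k
    have hk : (k : ℕ) ≤ m := by omega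
    have h2 := (counts q.1 q.2.1 q.2.2.2 k hk).2
    unfold heights
    show (((steps q.1).take k).count U) - (((steps q.1).take k).count D) = q.1 k
    have : q.1 ⟨(k : ℕ), by omega⟩ = q.1 k := congrArg q.1 (Fin.ext rfl)
    omega
  right_inv w := by
    apply Subtype.ext
    apply DyckWord.ext
    show steps (ofWord w).1 = w.1.toList
    apply List.ext_getElem (by rw [length_steps, w.2])
    intro k h1 h2
    rw [length_steps] at h1
    rw [steps_getElem _ h1]
    have := heights_step w.1 (k := k) (by omega)
    show (if heights w.1 k < heights w.1 (k + 1) then U else D) = w.1.toList[k]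
    rcases this with ⟨h, hh⟩ | ⟨h, hh⟩
    · rw [h, if_pos (by omega)]
    · rw [h, if_neg (by omega)]

end PathSet

def walkEquiv (n : ℕ) :
    {p : Fin (2 * n + 1) → ℕ × ℕ //
      p 0 = (0, 0) ∧ p (Fin.last (2 * n)) = (0, 0) ∧
      ∀ i : Fin (2 * n),
        ((p i.succ).1 = (p i.castSucc).1 + 1 ∨ (p i.castSucc).1 = (p i.succ).1 + 1) ∧
        ((p i.succ).2 = (p i.castSucc).2 + 1 ∨ (p i.castSucc).2 = (p i.succ).2 + 1)} ≃
    PathSet (2 * n) × PathSet (2 * n) where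
  toFun p := (⟨fun i => (p.1 i).1, congrArg Prod.fst p.2.1, congrArg Prod.fst p.2.2.1,
      fun i => (p.2.2.2 i).1⟩,
    ⟨fun i => (p.1 i).2, congrArg Prod.snd p.2.1, congrArg Prod.snd p.2.2.1,
      fun i => (p.2.2.2 i).2⟩)
  invFun q := ⟨fun i => (q.1.1 i, q.2.1 i),
    Prod.ext q.1.2.1 q.2.2.1, Prod.ext q.1.2.2.1 q.2.2.2.1,
    fun i => ⟨q.1.2.2.2 i, q.2.2.2.2 i⟩⟩
  left_inv p := rfl
  right_inv q := rfl

theorem card_pathSet (n : ℕ) : Nat.card (PathSet (2 * n)) = catalan n := by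
  rw [Nat.card_congr (PathSet.equivWord (m := 2 * n))]
  rw [← DyckWord.card_dyckWord_semilength_eq_catalan n, ← Nat.card_eq_fintype_card]
  apply Nat.card_congr
  apply Equiv.subtypeEquivRight
  intro w
  have := w.two_mul_semilength_eq_length
  omega

/-- The number of walks on ℕ² starting and ending at `(0,0)`, consisting of `2n` steps
each taken from `{(-1,-1), (-1,1), (1,-1), (1,1)}` (staying in ℕ² throughout),
equals the square of the `n`-th Catalan number. -/
theorem walks_count_eq_catalan_sq (n : ℕ) :
    Nat.card {p : Fin (2 * n + 1) → ℕ × ℕ //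
      p 0 = (0, 0) ∧ p (Fin.last (2 * n)) = (0, 0) ∧
      ∀ i : Fin (2 * n),
        ((p i.succ).1 = (p i.castSucc).1 + 1 ∨ (p i.castSucc).1 = (p i.succ).1 + 1) ∧
        ((p i.succ).2 = (p i.castSucc).2 + 1 ∨ (p i.castSucc).2 = (p i.succ).2 + 1)} =
    (catalan n) ^ 2 := by
  rw [Nat.card_congr (walkEquiv n), Nat.card_prod, card_pathSet, sq]
end

section
/- For every n ≥ 0, the squared Catalan number satisfies the identity c_n² = Σ_{k=0}^{n} (2n)!/(k!·k!·(n-k)!·(n-k)!) + Σ_{k=0}^{n-1} (2n)!/(k!·(k+2)!·(n-k-1)!·(n-k-1)!) − 2·Σ_{k=0}^{n-1} (2n)!/(k!·(k+1)!·(n-k-1)!·(n-k)!). -/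
open Finset Nat

private lemma fne (a : ℕ) : ((a ! : ℚ)) ≠ 0 :=
  Nat.cast_ne_zero.mpr (Nat.factorial_ne_zero a)

private lemma t1 (n k : ℕ) (hk : k ≤ n) :
    ((2*n)! : ℚ) / ((k ! : ℚ) * (k !) * ((n - k)!) * ((n - k)!))
      = ((2*n).choose n) * (n.choose k) * (n.choose k) := by
  have h1 : n ≤ 2*n := by omega
  rw [Nat.cast_choose ℚ h1, Nat.cast_choose ℚ hk,
    show 2*n - n = n from by omega]
  have := fne n; have := fne k; have := fne (n-k)
  field_simp

private lemma t2 (m k : ℕ) (hk : k ≤ m) :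
    ((2*(m+1))! : ℚ) / ((k ! : ℚ) * ((k + 2)!) * ((m - k)!) * ((m - k)!))
      = ((2*(m+1)).choose m) * (m.choose k) * ((m+2).choose (k+2)) := by
  have h1 : m ≤ 2*(m+1) := by omega
  have h2 : k + 2 ≤ m + 2 := by omega
  rw [Nat.cast_choose ℚ h1, Nat.cast_choose ℚ hk, Nat.cast_choose ℚ h2,
    show 2*(m+1) - m = m+2 from by omega, show m+2 - (k+2) = m - k from by omega]
  have := fne m; have := fne k; have := fne (m-k); have := fne (m+2); have := fne (k+2)
  field_simp

private lemma t3 (m k : ℕ) (hk : k ≤ m) :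
    ((2*(m+1))! : ℚ) / ((k ! : ℚ) * ((k + 1)!) * ((m - k)!) * ((m + 1 - k)!))
      = ((2*(m+1)).choose (m+1)) * ((m+1).choose k) * ((m+1).choose (k+1)) := by
  have h1 : m + 1 ≤ 2*(m+1) := by omega
  have h2 : k ≤ m + 1 := by omega
  have h3 : k + 1 ≤ m + 1 := by omega
  rw [Nat.cast_choose ℚ h1, Nat.cast_choose ℚ h2, Nat.cast_choose ℚ h3,
    show 2*(m+1) - (m+1) = m+1 from by omega, show m+1 - k = m+1-k from rfl,
    show m+1 - (k+1) = m - k from by omega]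
  have := fne (m+1); have := fne k; have := fne (m-k); have := fne (k+1); have := fne (m+1-k)
  field_simp

private lemma v1 (n : ℕ) :
    ∑ k ∈ range (n+1), (n.choose k : ℚ) * n.choose k = ((2*n).choose n : ℚ) := by
  have : ∑ k ∈ range (n+1), n.choose k * n.choose k = (2*n).choose n := by
    rw [two_mul, Nat.add_choose_eq, Finset.Nat.sum_antidiagonal_eq_sum_range_succ_mk]
    refine Finset.sum_congr rfl fun k hk => ?_
    rw [Nat.choose_symm (Nat.lt_succ_iff.mp (mem_range.mp hk))]
  exact_mod_cast this

private lemma v2 (m : ℕ) :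
    ∑ k ∈ range (m+1), (m.choose k : ℚ) * (m+2).choose (k+2) = ((2*(m+1)).choose m : ℚ) := by
  have : ∑ k ∈ range (m+1), m.choose k * (m+2).choose (k+2) = (2*(m+1)).choose m := by
    rw [show 2*(m+1) = m + (m+2) from by omega, Nat.add_choose_eq,
      Finset.Nat.sum_antidiagonal_eq_sum_range_succ_mk]
    refine Finset.sum_congr rfl fun k hk => ?_
    have hk' : k ≤ m := Nat.lt_succ_iff.mp (mem_range.mp hk)
    rw [show m - k = m + 2 - (k+2) from by omega, Nat.choose_symm (by omega)]
  exact_mod_cast this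

private lemma v3 (m : ℕ) :
    ∑ k ∈ range (m+1), ((m+1).choose k : ℚ) * (m+1).choose (k+1) = ((2*(m+1)).choose m : ℚ) := by
  have : ∑ k ∈ range (m+1), (m+1).choose k * (m+1).choose (k+1) = (2*(m+1)).choose m := by
    rw [show 2*(m+1) = (m+1) + (m+1) from by omega, Nat.add_choose_eq,
      Finset.Nat.sum_antidiagonal_eq_sum_range_succ_mk]
    refine Finset.sum_congr rfl fun k hk => ?_
    have hk' : k ≤ m := Nat.lt_succ_iff.mp (mem_range.mp hk)
    rw [show m - k = m + 1 - (k+1) from by omega, Nat.choose_symm (by omega)]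
  exact_mod_cast this

/-- The squared Catalan number as an alternating sum of multinomial coefficients:
`c_n² = Σ_{k=0}^{n} (k,k,n-k,n-k)! + Σ_{k=0}^{n-1} (k,k+2,n-k-1,n-k-1)!
        − 2 Σ_{k=0}^{n-1} (k,k+1,n-k-1,n-k)!`. -/
theorem catalan_sq_multinomial (n : ℕ) :
    ((catalan n : ℚ)) ^ 2 =
      (∑ k ∈ range (n + 1),
        ((2 * n)! : ℚ) / ((k ! : ℚ) * (k !) * ((n - k)!) * ((n - k)!))) +
      (∑ k ∈ range n,
        ((2 * n)! : ℚ) / ((k ! : ℚ) * ((k + 2)!) * ((n - k - 1)!) * ((n - k - 1)!))) -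
      2 * ∑ k ∈ range n,
        ((2 * n)! : ℚ) / ((k ! : ℚ) * ((k + 1)!) * ((n - k - 1)!) * ((n - k)!)) := by
  obtain _ | m := n
  · simp [catalan]
  have hs1 : (∑ k ∈ range (m + 1 + 1),
      ((2 * (m+1))! : ℚ) / ((k ! : ℚ) * (k !) * ((m + 1 - k)!) * ((m + 1 - k)!)))
      = ((2*(m+1)).choose (m+1) : ℚ) * ((2*(m+1)).choose (m+1) : ℚ) := by
    rw [Finset.sum_congr rfl fun k hk => t1 (m+1) k (Nat.lt_succ_iff.mp (mem_range.mp hk))]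
    simp only [mul_assoc, ← Finset.mul_sum, Nat.succ_eq_add_one]
    rw [v1 (m+1)]
  have hs2 : (∑ k ∈ range (m + 1),
      ((2 * (m+1))! : ℚ) / ((k ! : ℚ) * ((k + 2)!) * ((m + 1 - k - 1)!) * ((m + 1 - k - 1)!)))
      = ((2*(m+1)).choose m : ℚ) * ((2*(m+1)).choose m : ℚ) := by
    have hrw : ∀ k ∈ range (m+1),
        ((2 * (m+1))! : ℚ) / ((k ! : ℚ) * ((k + 2)!) * ((m + 1 - k - 1)!) * ((m + 1 - k - 1)!))
          = ((2*(m+1)).choose m : ℚ) * (m.choose k) * ((m+2).choose (k+2)) := by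
      intro k hk
      have hk' : k ≤ m := Nat.lt_succ_iff.mp (mem_range.mp hk)
      rw [show m + 1 - k - 1 = m - k from by omega]
      exact t2 m k hk'
    rw [Finset.sum_congr rfl hrw]
    simp only [mul_assoc, ← Finset.mul_sum, Nat.succ_eq_add_one]
    rw [v2 m]
  have hs3 : (∑ k ∈ range (m + 1),
      ((2 * (m+1))! : ℚ) / ((k ! : ℚ) * ((k + 1)!) * ((m + 1 - k - 1)!) * ((m + 1 - k)!)))
      = ((2*(m+1)).choose (m+1) : ℚ) * ((2*(m+1)).choose m : ℚ) := by
    have hrw : ∀ k ∈ range (m+1),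
        ((2 * (m+1))! : ℚ) / ((k ! : ℚ) * ((k + 1)!) * ((m + 1 - k - 1)!) * ((m + 1 - k)!))
          = ((2*(m+1)).choose (m+1) : ℚ) * ((m+1).choose k) * ((m+1).choose (k+1)) := by
      intro k hk
      have hk' : k ≤ m := Nat.lt_succ_iff.mp (mem_range.mp hk)
      rw [show m + 1 - k - 1 = m - k from by omega]
      exact t3 m k hk'
    rw [Finset.sum_congr rfl hrw]
    simp only [mul_assoc, ← Finset.mul_sum, Nat.succ_eq_add_one]
    rw [v3 m]
  rw [hs1, hs2, hs3]
  set C : ℚ := ((2*(m+1)).choose (m+1) : ℚ) with hC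
  set D : ℚ := ((2*(m+1)).choose m : ℚ) with hD
  have hn1 : ((m : ℚ) + 1 + 1) ≠ 0 := by positivity
  have hc : ((m : ℚ) + 1 + 1) * (catalan (m+1) : ℚ) = C := by
    have h := succ_mul_catalan_eq_centralBinom (m+1)
    rw [Nat.centralBinom] at h
    rw [hC]
    exact_mod_cast h
  have hd : D * ((m : ℚ) + 1 + 1) = C * ((m : ℚ) + 1) := by
    have h := Nat.choose_succ_right_eq (2*(m+1)) m
    rw [show 2*(m+1) - m = m + 1 + 1 from by omega] at h
    rw [hC, hD]
    exact_mod_cast h.symm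
  have hcat : (catalan (m+1) : ℚ) = C / ((m : ℚ) + 1 + 1) := by
    rw [eq_div_iff hn1]; linarith [hc]
  have hDe : D = C * ((m : ℚ) + 1) / ((m : ℚ) + 1 + 1) := by
    rw [eq_div_iff hn1]; exact hd
  push_cast [hcat, hDe]
  field_simp
  ring
end

section
/- Define M(z) = (1/(πz))E(16z) − ((1−16z)/(2πz))K(16z) − 1/(4z), where K and E are the complete elliptic integrals of the first and second kind (as functions of the parameter m). Then M satisfies the linear ODE z²(1−16z)M''(z) + z(3−32z)M'(z) + (1−4z)M(z) = 1. -/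
open Real intervalIntegral

noncomputable def ellipticK (m : ℝ) : ℝ :=
  ∫ θ in (0:ℝ)..(Real.pi / 2), (Real.sqrt (1 - m * Real.sin θ ^ 2))⁻¹

noncomputable def ellipticE (m : ℝ) : ℝ :=
  ∫ θ in (0:ℝ)..(Real.pi / 2), Real.sqrt (1 - m * Real.sin θ ^ 2)

noncomputable def genFnM (z : ℝ) : ℝ :=
  (1 / (Real.pi * z)) * ellipticE (16 * z) -
    ((1 - 16 * z) / (2 * Real.pi * z)) * ellipticK (16 * z) - 1 / (4 * z)

/-!
Write `Δ = √(1 - m sin² θ)`. Differentiating under the integral sign gives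
`E' = (E - K) / (2m)` directly, and `K' = (E - (1 - m) K) / (2m (1 - m))` after subtracting the
derivative of `sin θ cos θ / Δ`, whose integral over `[0, π/2]` vanishes. Hence `M'` and `M''` are
combinations of `E(16z)` and `K(16z)` with coefficients rational in `z`, and the differential
equation becomes an identity between rational functions.
-/

open MeasureTheory Metric Set

lemma one_sub_mul_sin_sq_mem_Icc (m θ : ℝ) :
    1 - m * sin θ ^ 2 ∈ Icc (min 1 (1 - m)) (1 + |m|) := by
  have hs₀ : 0 ≤ sin θ ^ 2 := sq_nonneg _
  have hs₁ : sin θ ^ 2 ≤ 1 := sin_sq_le_one θ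
  constructor
  · rcases le_or_gt m 0 with h | h
    · exact (min_le_left _ _).trans (by nlinarith)
    · exact (min_le_right _ _).trans (by nlinarith)
  · nlinarith [neg_abs_le m, le_abs_self m]

lemma one_sub_mul_sin_sq_pos {m : ℝ} (hm : m < 1) (θ : ℝ) : 0 < 1 - m * sin θ ^ 2 :=
  (lt_min one_pos (sub_pos.2 hm)).trans_le (one_sub_mul_sin_sq_mem_Icc m θ).1

lemma one_sub_mul_sin_sq_mem_Icc_of_mem_ball {m x : ℝ} (hx : x ∈ ball m ((1 - m) / 2)) (θ : ℝ) :
    1 - x * sin θ ^ 2 ∈ Icc (min 1 ((1 - m) / 2)) (1 + |m| + (1 - m) / 2) := by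
  rw [mem_ball, Real.dist_eq, abs_lt] at hx
  obtain ⟨hlo, hhi⟩ := one_sub_mul_sin_sq_mem_Icc x θ
  refine ⟨le_trans (min_le_min le_rfl (by linarith)) hlo, hhi.trans ?_⟩
  linarith [abs_sub_abs_le_abs_sub x m, abs_lt.2 hx]

lemma ContinuousOn.comp_one_sub_mul_sin_sq {f : ℝ → ℝ} (hf : ContinuousOn f (Ioi 0)) {m : ℝ}
    (hm : m < 1) : Continuous fun θ => f (1 - m * sin θ ^ 2) :=
  hf.comp_continuous (by fun_prop) (one_sub_mul_sin_sq_pos hm)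

/-- For `x` near `m` the argument `1 - x sin² θ` stays in a compact subinterval of `(0, ∞)`,
on which `f'` is bounded. -/
theorem hasDerivAt_integral_comp_one_sub_mul_sin_sq {f f' : ℝ → ℝ}
    (hf : ∀ u, 0 < u → HasDerivAt f (f' u) u) (hf' : ContinuousOn f' (Ioi 0))
    {m : ℝ} (hm : m < 1) (a b : ℝ) :
    HasDerivAt (fun x => ∫ θ in a..b, f (1 - x * sin θ ^ 2))
      (∫ θ in a..b, -sin θ ^ 2 * f' (1 - m * sin θ ^ 2)) m := by
  have hfc : ContinuousOn f (Ioi 0) := fun u hu => (hf u hu).continuousAt.continuousWithinAt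
  have hδ : 0 < (1 - m) / 2 := by linarith
  have hsub : Icc (min 1 ((1 - m) / 2)) (1 + |m| + (1 - m) / 2) ⊆ Ioi 0 :=
    fun u hu => (lt_min one_pos hδ).trans_le hu.1
  obtain ⟨B, hB⟩ := isCompact_Icc.exists_bound_of_continuousOn (hf'.mono hsub)
  have hlt : ∀ x ∈ ball m ((1 - m) / 2), x < 1 := fun x hx => by
    rw [mem_ball, Real.dist_eq, abs_lt] at hx
    linarith
  refine (hasDerivAt_integral_of_dominated_loc_of_deriv_le
    (F := fun x θ => f (1 - x * sin θ ^ 2)) (F' := fun x θ => -sin θ ^ 2 * f' (1 - x * sin θ ^ 2))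
    (bound := fun _ => B)
    (ball_mem_nhds m hδ) ?_ ((hfc.comp_one_sub_mul_sin_sq hm).intervalIntegrable _ _)
    ?_ ?_ intervalIntegrable_const ?_).2
  · filter_upwards [ball_mem_nhds m hδ] with x hx
    exact (hfc.comp_one_sub_mul_sin_sq (hlt x hx)).aestronglyMeasurable
  · exact ((continuous_sin.pow 2).neg.mul (hf'.comp_one_sub_mul_sin_sq hm)).aestronglyMeasurable
  · refine .of_forall fun θ _ x hx => ?_
    have hu := one_sub_mul_sin_sq_mem_Icc_of_mem_ball hx θ
    calc ‖-sin θ ^ 2 * f' (1 - x * sin θ ^ 2)‖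
        = sin θ ^ 2 * ‖f' (1 - x * sin θ ^ 2)‖ := by
          rw [norm_mul, norm_neg, Real.norm_of_nonneg (sq_nonneg _)]
      _ ≤ 1 * B := mul_le_mul (sin_sq_le_one θ) (hB _ hu) (norm_nonneg _) zero_le_one
      _ = B := one_mul B
  · refine .of_forall fun θ _ x hx => ?_
    have h := (hf _ (one_sub_mul_sin_sq_pos (hlt x hx) θ)).comp x
      (((hasDerivAt_id x).mul_const (sin θ ^ 2)).const_sub 1)
    exact h.congr_deriv (by ring)

lemma continuousOn_inv_sqrt : ContinuousOn (fun u : ℝ => (√u)⁻¹) (Ioi 0) :=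
  continuous_sqrt.continuousOn.inv₀ fun _ hu => (sqrt_pos.2 hu).ne'

lemma hasDerivAt_inv_sqrt {u : ℝ} (hu : 0 < u) :
    HasDerivAt (fun u : ℝ => (√u)⁻¹) (-1 / (2 * √u ^ 3)) u := by
  have hd := sqrt_pos.2 hu
  refine ((hasDerivAt_sqrt hu.ne').inv hd.ne').congr_deriv ?_
  field_simp

lemma integral_sin_sq_div_sqrt_one_sub_mul_sin_sq {m : ℝ} (hm : m < 1) (hm0 : m ≠ 0) :
    ∫ θ in (0)..π / 2, sin θ ^ 2 / √(1 - m * sin θ ^ 2) = (ellipticK m - ellipticE m) / m := by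
  have hpt : ∀ θ, sin θ ^ 2 / √(1 - m * sin θ ^ 2) =
      ((√(1 - m * sin θ ^ 2))⁻¹ - √(1 - m * sin θ ^ 2)) / m := fun θ => by
    have hu := one_sub_mul_sin_sq_pos hm θ
    have hd := sqrt_pos.2 hu
    rw [eq_div_iff hm0, div_mul_eq_mul_div, div_eq_iff hd.ne', sub_mul, inv_mul_cancel₀ hd.ne',
      ← sq, sq_sqrt hu.le]
    ring
  simp_rw [hpt]
  rw [intervalIntegral.integral_div, intervalIntegral.integral_sub
    ((continuousOn_inv_sqrt.comp_one_sub_mul_sin_sq hm).intervalIntegrable _ _)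
    ((continuous_sqrt.continuousOn.comp_one_sub_mul_sin_sq hm).intervalIntegrable _ _)]
  rfl

lemma hasDerivAt_sin_mul_cos_div_sqrt_one_sub_mul_sin_sq {m : ℝ} (hm : m < 1) (θ : ℝ) :
    HasDerivAt (fun θ => sin θ * cos θ / √(1 - m * sin θ ^ 2))
      ((1 - 2 * sin θ ^ 2 + m * sin θ ^ 4) / √(1 - m * sin θ ^ 2) ^ 3) θ := by
  have hu := one_sub_mul_sin_sq_pos hm θ
  have hd := sqrt_pos.2 hu
  have hΔ : HasDerivAt (fun θ => 1 - m * sin θ ^ 2) (-(m * (2 * sin θ * cos θ))) θ := by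
    simpa using (((hasDerivAt_sin θ).pow 2).const_mul m).const_sub 1
  refine (((hasDerivAt_sin θ).mul (hasDerivAt_cos θ)).div
    ((hasDerivAt_sqrt hu.ne').comp θ hΔ) hd.ne').congr_deriv ?_
  have hsq := sq_sqrt hu.le
  simp only [Function.comp_apply, Pi.mul_apply]
  set d := √(1 - m * sin θ ^ 2)
  field_simp
  linear_combination (d ^ 2 + m * sin θ ^ 2) * cos_sq' θ + (1 - 2 * sin θ ^ 2) * hsq

lemma integral_sin_sq_div_sqrt_one_sub_mul_sin_sq_pow_three {m : ℝ} (hm : m < 1) (hm0 : m ≠ 0) :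
    ∫ θ in (0)..π / 2, sin θ ^ 2 / √(1 - m * sin θ ^ 2) ^ 3 =
      (ellipticE m - (1 - m) * ellipticK m) / (m * (1 - m)) := by
  set g' := fun θ => (1 - 2 * sin θ ^ 2 + m * sin θ ^ 4) / √(1 - m * sin θ ^ 2) ^ 3
  have hg' : Continuous g' := by
    refine .div (by fun_prop) (by fun_prop) fun θ => ?_
    exact pow_ne_zero 3 (sqrt_pos.2 (one_sub_mul_sin_sq_pos hm θ)).ne'
  have hg'_int : ∫ θ in (0)..π / 2, g' θ = 0 := by
    rw [integral_eq_sub_of_hasDerivAt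
      (fun θ _ => hasDerivAt_sin_mul_cos_div_sqrt_one_sub_mul_sin_sq hm θ)
      (hg'.intervalIntegrable _ _)]
    simp
  have hm1 : 1 - m ≠ 0 := by linarith
  have hpt : ∀ θ, sin θ ^ 2 / √(1 - m * sin θ ^ 2) ^ 3 =
      (√(1 - m * sin θ ^ 2) - (1 - m) * (√(1 - m * sin θ ^ 2))⁻¹) / (m * (1 - m)) -
        g' θ / (1 - m) := fun θ => by
    have hu := one_sub_mul_sin_sq_pos hm θ
    have hd := sqrt_pos.2 hu
    have hsq := sq_sqrt hu.le
    simp only [g']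
    set d := √(1 - m * sin θ ^ 2)
    field_simp
    linear_combination (-(d ^ 2 + m - m * sin θ ^ 2)) * hsq
  have hE := (continuous_sqrt.continuousOn.comp_one_sub_mul_sin_sq hm).intervalIntegrable
    (μ := volume) 0 (π / 2)
  have hK := (continuousOn_inv_sqrt.comp_one_sub_mul_sin_sq hm).intervalIntegrable
    (μ := volume) 0 (π / 2)
  simp_rw [hpt]
  rw [intervalIntegral.integral_sub ((hE.sub (hK.const_mul _)).div_const _)
      ((hg'.intervalIntegrable _ _).div_const _), intervalIntegral.integral_div,
    intervalIntegral.integral_div, hg'_int, intervalIntegral.integral_sub hE (hK.const_mul _),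
    intervalIntegral.integral_const_mul]
  rw [zero_div, sub_zero]
  rfl

theorem hasDerivAt_ellipticE {m : ℝ} (hm : m < 1) (hm0 : m ≠ 0) :
    HasDerivAt ellipticE ((ellipticE m - ellipticK m) / (2 * m)) m := by
  have hf' : ContinuousOn (fun u : ℝ => 1 / (2 * √u)) (Ioi 0) :=
    continuousOn_const.div (by fun_prop) fun u hu => (mul_pos two_pos (sqrt_pos.2 hu)).ne'
  have h := hasDerivAt_integral_comp_one_sub_mul_sin_sq
    (fun u hu => hasDerivAt_sqrt hu.ne') hf' hm 0 (π / 2)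
  have hpt : ∀ θ, -sin θ ^ 2 * (1 / (2 * √(1 - m * sin θ ^ 2))) =
      -(1 / 2) * (sin θ ^ 2 / √(1 - m * sin θ ^ 2)) := fun θ => by ring
  simp_rw [hpt, intervalIntegral.integral_const_mul,
    integral_sin_sq_div_sqrt_one_sub_mul_sin_sq hm hm0] at h
  exact h.congr_deriv (by ring)

theorem hasDerivAt_ellipticK {m : ℝ} (hm : m < 1) (hm0 : m ≠ 0) :
    HasDerivAt ellipticK ((ellipticE m - (1 - m) * ellipticK m) / (2 * m * (1 - m))) m := by
  have hf' : ContinuousOn (fun u : ℝ => -1 / (2 * √u ^ 3)) (Ioi 0) :=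
    continuousOn_const.div (by fun_prop) fun u hu => by have := sqrt_pos.2 hu; positivity
  have h := hasDerivAt_integral_comp_one_sub_mul_sin_sq
    (fun u hu => hasDerivAt_inv_sqrt hu) hf' hm 0 (π / 2)
  have hpt : ∀ θ, -sin θ ^ 2 * (-1 / (2 * √(1 - m * sin θ ^ 2) ^ 3)) =
      1 / 2 * (sin θ ^ 2 / √(1 - m * sin θ ^ 2) ^ 3) := fun θ => by ring
  simp_rw [hpt, intervalIntegral.integral_const_mul,
    integral_sin_sq_div_sqrt_one_sub_mul_sin_sq_pow_three hm hm0] at h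
  exact h.congr_deriv (by field_simp)

theorem hasDerivAt_ellipticE_const_mul {c z : ℝ} (hcz : c * z < 1) (hcz0 : c * z ≠ 0) :
    HasDerivAt (fun z => ellipticE (c * z))
      ((ellipticE (c * z) - ellipticK (c * z)) / (2 * z)) z := by
  have hz : z ≠ 0 := right_ne_zero_of_mul hcz0
  have hc : c ≠ 0 := left_ne_zero_of_mul hcz0
  refine ((hasDerivAt_ellipticE hcz hcz0).comp z ((hasDerivAt_id z).const_mul c)).congr_deriv ?_
  field_simp

theorem hasDerivAt_one_sub_mul_ellipticK {m : ℝ} (hm : m < 1) (hm0 : m ≠ 0) :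
    HasDerivAt (fun m => (1 - m) * ellipticK m)
      ((ellipticE m - (1 + m) * ellipticK m) / (2 * m)) m := by
  have hm1 : 1 - m ≠ 0 := by linarith
  refine (((hasDerivAt_id' m).const_sub 1).mul (hasDerivAt_ellipticK hm hm0)).congr_deriv ?_
  field_simp
  ring

theorem hasDerivAt_one_sub_mul_ellipticK_const_mul {c z : ℝ} (hcz : c * z < 1)
    (hcz0 : c * z ≠ 0) :
    HasDerivAt (fun z => (1 - c * z) * ellipticK (c * z))
      ((ellipticE (c * z) - (1 + c * z) * ellipticK (c * z)) / (2 * z)) z := by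
  have hz : z ≠ 0 := right_ne_zero_of_mul hcz0
  have hc : c ≠ 0 := left_ne_zero_of_mul hcz0
  refine ((hasDerivAt_one_sub_mul_ellipticK hcz hcz0).comp z
    ((hasDerivAt_id z).const_mul c)).congr_deriv ?_
  field_simp

noncomputable def genFnM' (z : ℝ) : ℝ :=
  (-3 * ellipticE (16 * z) + (1 - 16 * z) * ellipticK (16 * z)) / (4 * π * z ^ 2) + 1 / (4 * z ^ 2)

noncomputable def genFnM'' (z : ℝ) : ℝ :=
  (5 * ellipticE (16 * z) + (24 * z - 1) * ellipticK (16 * z)) / (4 * π * z ^ 3) - 1 / (2 * z ^ 3)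

theorem hasDerivAt_genFnM {z : ℝ} (hz : z ≠ 0) (hz' : 16 * z < 1) :
    HasDerivAt genFnM (genFnM' z) z := by
  have h16z : 16 * z ≠ 0 := mul_ne_zero (by norm_num) hz
  have hE := hasDerivAt_ellipticE_const_mul hz' h16z
  have hP := hasDerivAt_one_sub_mul_ellipticK_const_mul hz' h16z
  have hM : genFnM = fun z =>
      (ellipticE (16 * z) - (1 - 16 * z) * ellipticK (16 * z) / 2) / (π * z) - 1 / (4 * z) :=
    funext fun z => by unfold genFnM; ring
  rw [hM]
  refine (((hE.sub (hP.div_const 2)).div ((hasDerivAt_id z).const_mul π)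
    (mul_ne_zero pi_ne_zero hz)).sub ((hasDerivAt_const z (1 : ℝ)).div
      ((hasDerivAt_id z).const_mul 4) (mul_ne_zero four_ne_zero hz))).congr_deriv ?_
  simp only [genFnM', Pi.sub_apply, id]
  field_simp
  ring

theorem hasDerivAt_genFnM' {z : ℝ} (hz : z ≠ 0) (hz' : 16 * z < 1) :
    HasDerivAt genFnM' (genFnM'' z) z := by
  have h16z : 16 * z ≠ 0 := mul_ne_zero (by norm_num) hz
  have hE := hasDerivAt_ellipticE_const_mul hz' h16z
  have hP := hasDerivAt_one_sub_mul_ellipticK_const_mul hz' h16z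
  refine ((((hE.const_mul (-3)).add hP).div ((hasDerivAt_pow 2 z).const_mul (4 * π))
    (by positivity)).add ((hasDerivAt_const z (1 : ℝ)).div ((hasDerivAt_pow 2 z).const_mul 4)
      (by positivity))).congr_deriv ?_
  simp only [genFnM'', Pi.add_apply]
  field_simp
  ring

/-- The function `M(z) = (1/πz)E(16z) − ((1−16z)/2πz)K(16z) − 1/4z` satisfies the ODE
`z²(1−16z)M'' + z(3−32z)M' + (1−4z)M = 1` (for `z ≠ 0`, `16z < 1`). -/
theorem genFnM_ode (z : ℝ) (hz : z ≠ 0) (hz' : 16 * z < 1) :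
    z ^ 2 * (1 - 16 * z) * deriv (deriv genFnM) z +
      z * (3 - 32 * z) * deriv genFnM z + (1 - 4 * z) * genFnM z = 1 := by
  have hderiv : deriv genFnM =ᶠ[nhds z] genFnM' := by
    filter_upwards [eventually_ne_nhds hz,
      (continuous_const_mul 16).continuousAt.eventually_lt continuousAt_const hz']
      with x hx hx' using (hasDerivAt_genFnM hx hx').deriv
  rw [hderiv.deriv_eq, (hasDerivAt_genFnM' hz hz').deriv, (hasDerivAt_genFnM hz hz').deriv]
  unfold genFnM' genFnM'' genFnM
  field_simp
  ring
end

section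
/- The generating function of the squared Catalan numbers is given by Σ_{n≥0} c_n² z^n = (1/(πz))E(16z) − ((1−16z)/(2πz))K(16z) − 1/(4z) for real z with 0 < z < 1/16. -/
open Real intervalIntegral

/-!
Write `a_n = C(2n, n) / 4ⁿ`; this is the binomial coefficient `multichoose (1/2) n`, and
`a_n / (1 - 2n) = multichoose (-1/2) n`. The binomial series
`(1 - x)^(-a) = ∑ multichoose a n · xⁿ` and Wallis' formula `∫₀^{π/2} sin^{2n} = (π/2) a_n`,
integrated termwise, give
`K(16z) = (π/2) ∑ C(2n, n)² zⁿ` and `E(16z) = (π/2) ∑ C(2n, n)² zⁿ / (1 - 2n)`.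
Since `4 c_n² = 16 C(2n, n)² - (2n+3)/(2n+1) · C(2n+2, n+1)²`, the series `4z ∑ c_n² zⁿ` is
`16z` times the first series plus the terms `n ≥ 1` of twice the second minus the first.
-/

open Polynomial in
attribute [local instance] BinomialRing.toIsAddTorsionFree in
theorem Ring.succ_nsmul_multichoose_succ {R : Type*} [CommRing R] [BinomialRing R] (r : R)
    (n : ℕ) : (n + 1) • Ring.multichoose r (n + 1) = (r + n) * Ring.multichoose r n := by
  rw [← nsmul_right_inj (Nat.factorial_ne_zero n), smul_smul, mul_comm, ← Nat.factorial_succ,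
    Ring.factorial_nsmul_multichoose_eq_ascPochhammer, ← mul_smul_comm,
    Ring.factorial_nsmul_multichoose_eq_ascPochhammer, ascPochhammer_succ_right, smeval_mul,
    smeval_add, smeval_X, smeval_natCast]
  simp [mul_comm]

theorem Ring.multichoose_succ_eq_div_mul {K : Type*} [Field K] [CharZero K] [BinomialRing K]
    (r : K) (n : ℕ) : Ring.multichoose r (n + 1) = (r + n) / (n + 1) * Ring.multichoose r n := by
  rw [div_mul_eq_mul_div, eq_div_iff (Nat.cast_add_one_ne_zero n), mul_comm,
    ← Ring.succ_nsmul_multichoose_succ]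
  simp [nsmul_eq_mul]

theorem Real.multichoose_one_half (n : ℕ) :
    Ring.multichoose (1 / 2 : ℝ) n = n.centralBinom / 4 ^ n := by
  induction n with
  | zero => simp
  | succ n ih =>
    have h : ((n + 1 : ℕ) : ℝ) * (n + 1).centralBinom = 2 * (2 * n + 1) * n.centralBinom := by
      exact_mod_cast Nat.succ_mul_centralBinom_succ n
    rw [Ring.multichoose_succ_eq_div_mul, ih, pow_succ]
    push_cast at h ⊢
    field_simp
    linear_combination -2 * h

theorem Real.multichoose_neg_one_half (n : ℕ) :
    Ring.multichoose (-1 / 2 : ℝ) n = Ring.multichoose (1 / 2 : ℝ) n / (1 - 2 * n) := by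
  induction n with
  | zero => simp
  | succ n ih =>
    have hodd : (1 : ℝ) - 2 * n ≠ 0 := by
      rw [sub_ne_zero]; exact_mod_cast (by omega : 1 ≠ 2 * n)
    rw [Ring.multichoose_succ_eq_div_mul, ih, Ring.multichoose_succ_eq_div_mul]
    push_cast
    rw [show (1 : ℝ) - 2 * (n + 1) = -(2 * n + 1) by ring]
    field_simp [hodd]
    ring

theorem Real.hasSum_multichoose_mul_pow (a : ℝ) {x : ℝ} (hx : |x| < 1) :
    HasSum (fun n ↦ Ring.multichoose a n * x ^ n) (1 / (1 - x) ^ a) := by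
  have hx' : x ∈ Metric.eball (0 : ℝ) 1 := by simpa [edist_dist] using hx
  simpa [FormalMultilinearSeries.ofScalars_apply_eq, Ring.multichoose_eq, mul_comm] using
    (one_div_one_sub_rpow_hasFPowerSeriesOnBall_zero a).hasSum hx'

theorem Real.summable_abs_multichoose_mul_pow (a : ℝ) {x : ℝ} (hx : |x| < 1) :
    Summable (fun n ↦ |Ring.multichoose a n| * |x| ^ n) := by
  have hx' : x ∈ Metric.eball (0 : ℝ) 1 := by simpa [edist_dist] using hx
  have := (one_div_one_sub_rpow_hasFPowerSeriesOnBall_zero a).r_le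
  simpa [FormalMultilinearSeries.ofScalars_apply_eq, Ring.multichoose_eq, mul_comm] using
    FormalMultilinearSeries.summable_norm_apply _ (Metric.eball_subset_eball this hx')

theorem integral_sin_pow_two_mul (n : ℕ) :
    ∫ θ in (0 : ℝ)..π / 2, sin θ ^ (2 * n) = π / 2 * Ring.multichoose (1 / 2 : ℝ) n := by
  induction n with
  | zero => simp
  | succ n ih =>
    rw [mul_add_one, integral_sin_pow, ih, Ring.multichoose_succ_eq_div_mul]
    simp only [sin_zero, cos_pi_div_two, Nat.cast_mul, Nat.cast_ofNat]
    field_simp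
    ring

theorem hasSum_integral_one_div_one_sub_mul_sin_sq_rpow (a : ℝ) {m : ℝ} (hm₀ : 0 ≤ m)
    (hm₁ : m < 1) :
    HasSum (fun n ↦ π / 2 * Ring.multichoose a n * Ring.multichoose (1 / 2 : ℝ) n * m ^ n)
      (∫ θ in (0 : ℝ)..π / 2, 1 / (1 - m * sin θ ^ 2) ^ a) := by
  have hm : |m| < 1 := by rwa [abs_of_nonneg hm₀]
  have hsin (θ : ℝ) : |m * sin θ ^ 2| ≤ m := by
    rw [abs_mul, abs_of_nonneg hm₀, abs_sq]
    exact mul_le_of_le_one_right hm₀ (sin_sq_le_one θ)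
  have hterm (n : ℕ) : ∫ θ in (0 : ℝ)..π / 2, Ring.multichoose a n * (m * sin θ ^ 2) ^ n =
      π / 2 * Ring.multichoose a n * Ring.multichoose (1 / 2 : ℝ) n * m ^ n := by
    simp_rw [mul_pow, ← pow_mul, integral_const_mul, integral_sin_pow_two_mul]
    ring
  simp_rw [← hterm]
  refine intervalIntegral.hasSum_integral_of_dominated_convergence
    (fun n _ ↦ |Ring.multichoose a n| * m ^ n) (fun n ↦ by fun_prop) (fun n ↦ ?_)
    (.of_forall fun _ _ ↦ by simpa [abs_of_nonneg hm₀] using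
      Real.summable_abs_multichoose_mul_pow a hm) intervalIntegrable_const
    (.of_forall fun θ _ ↦ Real.hasSum_multichoose_mul_pow a ((hsin θ).trans_lt hm₁))
  refine .of_forall fun θ _ ↦ ?_
  rw [norm_mul, norm_pow, Real.norm_eq_abs, Real.norm_eq_abs]
  gcongr
  exact hsin θ

theorem centralBinom_div_four_pow_sq_mul_pow (n : ℕ) (z : ℝ) :
    (n.centralBinom / 4 ^ n : ℝ) ^ 2 * (16 * z) ^ n = (n.centralBinom : ℝ) ^ 2 * z ^ n := by
  rw [mul_pow, show (16 : ℝ) ^ n = (4 ^ n) ^ 2 by rw [← pow_mul, mul_comm, pow_mul]; norm_num]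
  field_simp

theorem hasSum_centralBinom_sq_mul_pow {z : ℝ} (hz₀ : 0 ≤ z) (hz₁ : 16 * z < 1) :
    HasSum (fun n ↦ (n.centralBinom : ℝ) ^ 2 * z ^ n) (2 / π * ellipticK (16 * z)) := by
  have h := hasSum_integral_one_div_one_sub_mul_sin_sq_rpow (1 / 2) (by positivity) hz₁
  simp_rw [Real.multichoose_one_half, ← Real.sqrt_eq_rpow, one_div (√_)] at h
  refine (h.mul_left (2 / π)).congr_fun fun n ↦ ?_
  rw [← centralBinom_div_four_pow_sq_mul_pow]
  field_simp

theorem hasSum_centralBinom_sq_mul_pow_div {z : ℝ} (hz₀ : 0 ≤ z) (hz₁ : 16 * z < 1) :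
    HasSum (fun n : ℕ ↦ (n.centralBinom : ℝ) ^ 2 * z ^ n / (1 - 2 * n))
      (2 / π * ellipticE (16 * z)) := by
  have h := hasSum_integral_one_div_one_sub_mul_sin_sq_rpow (-1 / 2) (by positivity) hz₁
  have hE : ∫ θ in (0 : ℝ)..π / 2, 1 / (1 - 16 * z * sin θ ^ 2) ^ (-1 / 2 : ℝ) =
      ellipticE (16 * z) := by
    refine integral_congr fun θ _ ↦ ?_
    have : 0 ≤ 1 - 16 * z * sin θ ^ 2 := by nlinarith [sin_sq_le_one θ]
    rw [neg_div, rpow_neg this, one_div, inv_inv, ← sqrt_eq_rpow]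
  simp_rw [Real.multichoose_neg_one_half, Real.multichoose_one_half, hE] at h
  refine (h.mul_left (2 / π)).congr_fun fun n ↦ ?_
  rw [← centralBinom_div_four_pow_sq_mul_pow]
  field_simp

theorem four_mul_catalan_sq (n : ℕ) :
    4 * (catalan n : ℝ) ^ 2 = 16 * (n.centralBinom : ℝ) ^ 2 +
      (2 * ((n + 1).centralBinom : ℝ) ^ 2 / (1 - 2 * (n + 1 : ℕ)) -
        ((n + 1).centralBinom : ℝ) ^ 2) := by
  have hcat : (catalan n : ℝ) = n.centralBinom / (n + 1) := by
    rw [eq_div_iff (by positivity), mul_comm]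
    exact_mod_cast succ_mul_catalan_eq_centralBinom n
  have hcb : ((n + 1).centralBinom : ℝ) = 2 * (2 * n + 1) * n.centralBinom / (n + 1) := by
    rw [eq_div_iff (by positivity), mul_comm]
    exact_mod_cast Nat.succ_mul_centralBinom_succ n
  rw [hcat, hcb]
  push_cast
  rw [show (1 : ℝ) - 2 * (n + 1) = -(2 * n + 1) by ring]
  field_simp
  ring

/-- The generating function of the squared Catalan numbers:
`Σ c_n² zⁿ = (1/πz)E(16z) − ((1−16z)/2πz)K(16z) − 1/4z` for `0 < z < 1/16`. -/
theorem catalan_sq_genfn (z : ℝ) (h0 : 0 < z) (h1 : z < 1 / 16) :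
    (∑' n : ℕ, (catalan n : ℝ) ^ 2 * z ^ n) =
      (1 / (Real.pi * z)) * ellipticE (16 * z) -
        ((1 - 16 * z) / (2 * Real.pi * z)) * ellipticK (16 * z) - 1 / (4 * z) := by
  have hK := hasSum_centralBinom_sq_mul_pow h0.le (by linarith)
  have hE := hasSum_centralBinom_sq_mul_pow_div h0.le (by linarith)
  have hshift := (hasSum_nat_add_iff' 1).mpr ((hE.mul_left 2).sub hK)
  have hsum := ((hK.mul_left (16 * z)).add hshift).mul_left (4 * z)⁻¹
  refine (hsum.congr_fun fun n ↦ ?_).tsum_eq.trans ?_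
  · field_simp
    linear_combination z ^ (n + 1) * four_mul_catalan_sq n
  · simp only [Finset.sum_range_one, Nat.centralBinom_zero, Nat.cast_zero, Nat.cast_one,
      pow_zero, mul_zero, sub_zero, div_one, mul_one]
    field_simp
    ring
end

section
/- Let x = 2cos(2πθ₁) + 2cos(2πθ₂) and y = 1 + 2cos(2π(θ₁+θ₂)). Then the Jacobian determinant J = det(∂(x,y)/∂(θ₁,θ₂)) satisfies J² = 16π⁴(y+1)(3−y)(4y−x²+4). -/
open Real

theorem deriv_cos_const_mul (c t : ℝ) : deriv (fun s => cos (c * s)) t = -(c * sin (c * t)) := by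
  rw [deriv_comp_mul_left c cos t, Real.deriv_cos']
  simp

theorem sq_sin_sub_sin (a b : ℝ) :
    (sin a - sin b) ^ 2 = 2 + 2 * cos (a + b) - (cos a + cos b) ^ 2 := by
  rw [cos_add]
  linear_combination sin_sq_add_cos_sq a + sin_sq_add_cos_sq b

/-- For the change of variables `x = 2cos(2πθ₁) + 2cos(2πθ₂)`,
`y = 1 + 2cos(2π(θ₁+θ₂))` (Weyl group `D₄⁽²⁾` of `SO(4)`), the Jacobian determinant `J`
satisfies `J² = 16π⁴(y+1)(3−y)(4y−x²+4)`. -/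
theorem jacobian_sq_D4_2 (θ₁ θ₂ : ℝ) :
    letI x : ℝ → ℝ → ℝ := fun t₁ t₂ => 2 * Real.cos (2 * Real.pi * t₁) + 2 * Real.cos (2 * Real.pi * t₂)
    letI y : ℝ → ℝ → ℝ := fun t₁ t₂ => 1 + 2 * Real.cos (2 * Real.pi * (t₁ + t₂))
    letI J : ℝ := deriv (fun t => x t θ₂) θ₁ * deriv (fun t => y θ₁ t) θ₂ -
      deriv (fun t => x θ₁ t) θ₂ * deriv (fun t => y t θ₂) θ₁
    J ^ 2 = 16 * Real.pi ^ 4 * (y θ₁ θ₂ + 1) * (3 - y θ₁ θ₂) *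
      (4 * y θ₁ θ₂ - (x θ₁ θ₂) ^ 2 + 4) := by
  beta_reduce
  have dx₁ : deriv (fun t => 2 * cos (2 * π * t) + 2 * cos (2 * π * θ₂)) θ₁ =
      -(4 * π * sin (2 * π * θ₁)) := by
    simp [deriv_cos_const_mul]; ring
  have dx₂ : deriv (fun t => 2 * cos (2 * π * θ₁) + 2 * cos (2 * π * t)) θ₂ =
      -(4 * π * sin (2 * π * θ₂)) := by
    simp [deriv_cos_const_mul]; ring
  have dy₁ : deriv (fun t => 1 + 2 * cos (2 * π * (t + θ₂))) θ₁ =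
      -(4 * π * sin (2 * π * (θ₁ + θ₂))) := by
    simp; ring
  have dy₂ : deriv (fun t => 1 + 2 * cos (2 * π * (θ₁ + t))) θ₂ =
      -(4 * π * sin (2 * π * (θ₁ + θ₂))) := by
    simp [add_comm θ₁]; ring
  rw [dx₁, dx₂, dy₁, dy₂, mul_add]
  set a := 2 * π * θ₁
  set b := 2 * π * θ₂
  -- J = 16π² sin(a+b) (sin a - sin b), (y+1)(3-y) = 4 sin²(a+b), 4y - x² + 4 = 4 (sin a - sin b)²
  linear_combination 256 * π ^ 4 * (sin (a + b) ^ 2 * sq_sin_sub_sin a b +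
    (2 + 2 * cos (a + b) - (cos a + cos b) ^ 2) * sin_sq_add_cos_sq (a + b))
end
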